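/- arXiv:2304.10499 — 2 statements merged into one kernel-verified Lean document; each statement's English description precedes it below -/
import Mathlib

section
/- For the indicator penalty f₂(x) = λ·1{x < τ} with λ, s > 0: if τ - √(2λs) < x < τ then the minimum over v ∈ ℝ of p(v) = (1/(2s))(v - x)² + λ·1{v < τ} is attained at v = τ; if x < τ - √(2λs) or x ≥ τ then the minimum is attained at v = x. -/
/-!
Write `p v = q v + λ·1{v < τ}` with `q v = (v - x)² / (2s)`. Every `v < τ` pays at least `λ`,
so a candidate value `c ≤ λ` is the minimum as soon as `c ≤ q v` for all `v ≥ τ`. On `[τ, ∞)`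
the quadratic `q` is minimised at `max x τ`, and `q τ ≤ λ` exactly when `|τ - x| ≤ √(2λs)`:
below that threshold the candidate is `p τ = q τ`, above it `p x = λ`, and for `x ≥ τ` it is `p x = 0`.
-/

namespace IndicatorProx

noncomputable def proxObjective (lam s tau x v : ℝ) : ℝ :=
  1 / (2 * s) * (v - x) ^ 2 + if v < tau then lam else 0

variable {lam s tau x : ℝ}

theorem half_inv_mul_sq_lt_iff (hs : 0 < s) {d : ℝ} (hd : 0 ≤ d) :
    1 / (2 * s) * d ^ 2 < lam ↔ d < √(2 * lam * s) := by
  rw [Real.lt_sqrt hd, one_div_mul_eq_div, div_lt_iff₀ (by positivity)]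
  constructor <;> intro h <;> linarith

theorem le_half_inv_mul_sq_iff (hs : 0 < s) {d : ℝ} (hd : 0 ≤ d) :
    lam ≤ 1 / (2 * s) * d ^ 2 ↔ √(2 * lam * s) ≤ d := by
  rw [Real.sqrt_le_iff, one_div_mul_eq_div, le_div_iff₀ (by positivity)]
  constructor
  · intro h
    exact ⟨hd, by linarith⟩
  · rintro ⟨-, h⟩
    linarith

theorem proxObjective_of_le {v : ℝ} (hv : tau ≤ v) :
    proxObjective lam s tau x v = 1 / (2 * s) * (v - x) ^ 2 := by
  simp [proxObjective, not_lt.mpr hv]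

theorem le_proxObjective_of_le_lam (hs : 0 < s) {c : ℝ} (hc : c ≤ lam)
    (hright : ∀ v, tau ≤ v → c ≤ 1 / (2 * s) * (v - x) ^ 2) (v : ℝ) :
    c ≤ proxObjective lam s tau x v := by
  rcases lt_or_ge v tau with hv | hv
  · have hq : 0 ≤ 1 / (2 * s) * (v - x) ^ 2 := by positivity
    simp only [proxObjective, if_pos hv]
    linarith
  · exact (proxObjective_of_le hv).symm ▸ hright v hv

theorem proxObjective_tau_le (hs : 0 < s) (hnear : tau - √(2 * lam * s) < x) (hx : x < tau)
    (v : ℝ) : proxObjective lam s tau x tau ≤ proxObjective lam s tau x v := by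
  rw [proxObjective_of_le le_rfl]
  refine le_proxObjective_of_le_lam hs ?_ (fun w hw => ?_) v
  · exact ((half_inv_mul_sq_lt_iff hs (by linarith)).mpr (by linarith)).le
  · gcongr

theorem proxObjective_self_le_of_lt (hs : 0 < s) (hfar : x < tau - √(2 * lam * s)) (v : ℝ) :
    proxObjective lam s tau x x ≤ proxObjective lam s tau x v := by
  have hx : x < tau := by linarith [Real.sqrt_nonneg (2 * lam * s)]
  have hval : proxObjective lam s tau x x = lam := by simp [proxObjective, hx]
  rw [hval]
  refine le_proxObjective_of_le_lam hs le_rfl (fun w hw => ?_) v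
  rw [le_half_inv_mul_sq_iff hs (by linarith)]
  linarith

theorem proxObjective_self_le_of_le (hlam : 0 ≤ lam) (hs : 0 < s) (hx : tau ≤ x) (v : ℝ) :
    proxObjective lam s tau x x ≤ proxObjective lam s tau x v := by
  have hval : proxObjective lam s tau x x = 0 := by simp [proxObjective_of_le hx]
  rw [hval]
  exact le_proxObjective_of_le_lam hs hlam (fun w _ => by positivity) v

end IndicatorProx

open IndicatorProx in
/-- The proximal mapping of the indicator penalty `f₂(x) = λ·1{x < τ}`. -/
theorem prox_indicator_penalty (lam s tau x : ℝ) (hlam : 0 < lam) (hs : 0 < s) :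
    let p : ℝ → ℝ := fun v => 1 / (2 * s) * (v - x) ^ 2 + (if v < tau then lam else 0)
    ((tau - Real.sqrt (2 * lam * s) < x → x < tau → ∀ v, p tau ≤ p v) ∧
     ((x < tau - Real.sqrt (2 * lam * s) ∨ tau ≤ x) → ∀ v, p x ≤ p v)) := by
  refine ⟨proxObjective_tau_le hs, ?_⟩
  rintro (hfar | hx)
  · exact proxObjective_self_le_of_lt hs hfar
  · exact proxObjective_self_le_of_le hlam.le hs hx
end

section
/- ε-subgradient of an inexact proximal point: let h : ℝ^d → ℝ be convex, s > 0, and suppose z satisfies (1/(2s))‖z - u‖² + h(z) ≤ ε + inf_t [(1/(2s))‖t - u‖² + h(t)]. Then there exists v with ‖v‖ ≤ √(2sε) such that (1/s)(u - z - v) is an ε-subgradient of h at z, i.e. h(y) ≥ h(z) + ⟨(1/s)(u - z - v), y - z⟩ - ε for all y. -/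
/-!
The exact proximal point `w`, the minimizer of `φ t = ‖t - u‖² / (2s) + h t`, exists because
`φ` is continuous, bounded below and `1/s`-strongly convex, and its optimality condition says
that `(u - w) / s` is an exact subgradient of `h` at `w`. Expanding the square around `w` gives
`φ z - φ w = (h z - h w - ⟪(u - w) / s, z - w⟫) + ‖z - w‖² / (2s)`, a sum of two nonnegative
terms that is at most `ε` by the near-minimality of `z`. The second term bounds `v = w - z`, and
the first says that the subgradient at `w` is an `ε`-subgradient at `z`.
-/

open RealInnerProductSpace Set Filter Topology

section StrongConvexity

variable {E : Type*} [NormedAddCommGroup E] [NormedSpace ℝ E] {S : Set E} {m ε : ℝ} {f : E → ℝ}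

theorem StrongConvexOn.le_add_sq_norm_sub_of_forall_le_add (hf : StrongConvexOn S m f) {z : E}
    (hzS : z ∈ S) (hz : ∀ t ∈ S, f z ≤ ε + f t) {t : E} (htS : t ∈ S) :
    f z - 2 * ε + m / 4 * ‖t - z‖ ^ 2 ≤ f t := by
  have hmid := hf.2 htS hzS one_half_pos.le one_half_pos.le (add_halves 1)
  have hzmid := hz _ (hf.1 htS hzS one_half_pos.le one_half_pos.le (add_halves 1))
  simp only [smul_eq_mul] at hmid
  linarith

theorem StrongConvexOn.exists_forall_le [ProperSpace E] (hf : StrongConvexOn univ m f)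
    (hm : 0 < m) (hcont : Continuous f) (hbdd : BddBelow (range f)) :
    ∃ w, ∀ t, f w ≤ f t := by
  obtain ⟨_, ⟨z, rfl⟩, hlt⟩ :=
    exists_lt_of_csInf_lt (range_nonempty f) (lt_add_one (sInf (range f)))
  have hz : ∀ t ∈ univ, f z ≤ 1 + f t := fun t _ => by
    linarith [csInf_le hbdd (mem_range_self t)]
  refine hcont.exists_forall_le' z ?_
  filter_upwards [(isCompact_closedBall z √(8 / m)).compl_mem_cocompact] with t ht
  have hfar : 8 / m < ‖t - z‖ ^ 2 := by
    refine Real.lt_sq_of_sqrt_lt ?_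
    simpa [dist_eq_norm] using ht
  have hgrowth := hf.le_add_sq_norm_sub_of_forall_le_add (mem_univ z) hz (mem_univ t)
  rw [div_lt_iff₀ hm] at hfar
  linarith

end StrongConvexity

section Subgradient

variable {E : Type*} [NormedAddCommGroup E] [InnerProductSpace ℝ E]

def HasEpsSubgradientAt (h : E → ℝ) (p : E) (ε : ℝ) (z : E) : Prop :=
  ∀ y, h z + ⟪p, y - z⟫ - ε ≤ h y

theorem HasEpsSubgradientAt.of_le_add_inner {h : E → ℝ} {p w z : E} {δ ε : ℝ}
    (hw : HasEpsSubgradientAt h p δ w) (hz : h z ≤ h w + ⟪p, z - w⟫ + ε) :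
    HasEpsSubgradientAt h p (δ + ε) z := by
  intro y
  have hsplit : ⟪p, y - w⟫ = ⟪p, y - z⟫ + ⟪p, z - w⟫ := by
    rw [← inner_add_right, sub_add_sub_cancel]
  linarith [hw y]

theorem ConvexOn.hasEpsSubgradientAt_zero_of_le_add_sq_norm {h : E → ℝ}
    (hh : ConvexOn ℝ univ h) {p w : E} {c : ℝ}
    (hw : ∀ t, h w + ⟪p, t - w⟫ ≤ h t + c * ‖t - w‖ ^ 2) :
    HasEpsSubgradientAt h p 0 w := by
  intro y
  -- along the segment from `w` to `y` the slack is `O(θ²)`, while convexity gains `θ` times the gap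
  have hsegment : ∀ θ ∈ Ioc (0 : ℝ) 1, h w + ⟪p, y - w⟫ ≤ h y + θ * (c * ‖y - w‖ ^ 2) := by
    rintro θ ⟨hθ, hθ1⟩
    have hconv := hh.2 (mem_univ w) (mem_univ y) (sub_nonneg.2 hθ1) hθ.le (sub_add_cancel 1 θ)
    have hpt : (1 - θ) • w + θ • y - w = θ • (y - w) := by module
    have hquad := hw ((1 - θ) • w + θ • y)
    rw [hpt, inner_smul_right, norm_smul, Real.norm_of_nonneg hθ.le] at hquad
    simp only [smul_eq_mul] at hconv
    nlinarith
  have hlim : Tendsto (fun θ : ℝ => h y + θ * (c * ‖y - w‖ ^ 2)) (𝓝[>] 0) (𝓝 (h y)) :=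
    tendsto_nhdsWithin_of_tendsto_nhds <|
      (by fun_prop : Continuous fun θ : ℝ => h y + θ * (c * ‖y - w‖ ^ 2)).tendsto' 0 (h y)
        (by simp)
  simpa using ge_of_tendsto hlim (eventually_of_mem (Ioc_mem_nhdsGT one_pos) hsegment)

end Subgradient

section Prox

variable {E : Type*} [NormedAddCommGroup E] [InnerProductSpace ℝ E]

noncomputable def proxObjective (s : ℝ) (h : E → ℝ) (u t : E) : ℝ :=
  1 / (2 * s) * ‖t - u‖ ^ 2 + h t

theorem proxObjective_sub_proxObjective (s : ℝ) (h : E → ℝ) (u w t : E) :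
    proxObjective s h u t - proxObjective s h u w =
      h t - h w - ⟪(1 / s) • (u - w), t - w⟫ + 1 / (2 * s) * ‖t - w‖ ^ 2 := by
  have hexpand : ‖t - u‖ ^ 2 = ‖w - u‖ ^ 2 + 2 * ⟪w - u, t - w⟫ + ‖t - w‖ ^ 2 := by
    rw [← norm_add_sq_real, add_comm, sub_add_sub_cancel]
  have hflip : ⟪u - w, t - w⟫ = -⟪w - u, t - w⟫ := by rw [← inner_neg_left, neg_sub]
  simp only [proxObjective, hexpand, real_inner_smul_left, hflip]
  ring

theorem ConvexOn.strongConvexOn_proxObjective {h : E → ℝ} (hh : ConvexOn ℝ univ h) (s : ℝ)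
    (u : E) : StrongConvexOn univ (1 / s) (proxObjective s h u) := by
  rw [strongConvexOn_iff_convex]
  have haffine : ConvexOn ℝ univ fun x => h x + (-(1 / s) • innerₛₗ ℝ u) x :=
    hh.add ((-(1 / s) • innerₛₗ ℝ u).convexOn convex_univ)
  refine (haffine.add_const (1 / (2 * s) * ‖u‖ ^ 2)).congr fun x _ => ?_
  simp only [proxObjective, Pi.add_apply, LinearMap.smul_apply, innerₛₗ_apply_apply, smul_eq_mul,
    norm_sub_sq_real, real_inner_comm u x]
  ring

theorem ConvexOn.hasEpsSubgradientAt_zero_of_forall_proxObjective_le {h : E → ℝ}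
    (hh : ConvexOn ℝ univ h) {s : ℝ} {u w : E}
    (hw : ∀ t, proxObjective s h u w ≤ proxObjective s h u t) :
    HasEpsSubgradientAt h ((1 / s) • (u - w)) 0 w :=
  hh.hasEpsSubgradientAt_zero_of_le_add_sq_norm (c := 1 / (2 * s)) fun t => by
    linarith [hw t, proxObjective_sub_proxObjective s h u w t]

end Prox

theorem inexact_prox_eps_subgradient_general {d : ℕ} (s ε : ℝ) (hs : 0 < s)
    (h : EuclideanSpace ℝ (Fin d) → ℝ) (hconv : ConvexOn ℝ Set.univ h)
    (u z : EuclideanSpace ℝ (Fin d))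
    (hz : ∀ t, 1 / (2 * s) * ‖z - u‖ ^ 2 + h z ≤
               ε + (1 / (2 * s) * ‖t - u‖ ^ 2 + h t)) :
    ∃ v : EuclideanSpace ℝ (Fin d), ‖v‖ ≤ Real.sqrt (2 * s * ε) ∧
      ∀ y, h z + ⟪(1 / s) • (u - z - v), y - z⟫ - ε ≤ h y := by
  replace hz : ∀ t, proxObjective s h u z ≤ ε + proxObjective s h u t := hz
  have hcont : Continuous (proxObjective s h u) := by
    have := hconv.locallyLipschitz.continuous
    unfold proxObjective
    fun_prop
  obtain ⟨w, hw⟩ := (hconv.strongConvexOn_proxObjective s u).exists_forall_le (one_div_pos.2 hs)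
    hcont ⟨proxObjective s h u z - ε, by rintro _ ⟨t, rfl⟩; linarith [hz t]⟩
  have hsub := hconv.hasEpsSubgradientAt_zero_of_forall_proxObjective_le hw
  have hgap := proxObjective_sub_proxObjective s h u w z
  have hgap_nonneg := hsub z
  have hdist_nonneg : 0 ≤ 1 / (2 * s) * ‖z - w‖ ^ 2 := by positivity
  have hclose : ‖z - w‖ ^ 2 ≤ 2 * s * ε := by
    have : 1 / (2 * s) * ‖z - w‖ ^ 2 ≤ ε := by linarith [hz w]
    rwa [one_div_mul_eq_div, div_le_iff₀ (by positivity), mul_comm ε] at this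
  refine ⟨w - z, ?_, ?_⟩
  · rw [norm_sub_rev]
    exact (Real.le_sqrt (norm_nonneg _) ((sq_nonneg _).trans hclose)).2 hclose
  · rw [sub_sub_sub_cancel_right, ← zero_add ε]
    exact hsub.of_le_add_inner (by linarith [hz w])

/-- ε-subgradient property of an inexact proximal point. -/
theorem inexact_prox_eps_subgradient {d : ℕ} (s ε : ℝ) (hs : 0 < s) (hε : 0 ≤ ε)
    (h : EuclideanSpace ℝ (Fin d) → ℝ) (hconv : ConvexOn ℝ Set.univ h)
    (u z : EuclideanSpace ℝ (Fin d))
    (hz : ∀ t, 1 / (2 * s) * ‖z - u‖ ^ 2 + h z ≤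
               ε + (1 / (2 * s) * ‖t - u‖ ^ 2 + h t)) :
    ∃ v : EuclideanSpace ℝ (Fin d), ‖v‖ ≤ Real.sqrt (2 * s * ε) ∧
      ∀ y, h z + ⟪(1 / s) • (u - z - v), y - z⟫ - ε ≤ h y :=
  inexact_prox_eps_subgradient_general s ε hs h hconv u z hz
end
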